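/- Let F be an invertible n×n complex matrix with F·F̄ = ε·1, where ε ∈ {1, −1}, F̄ denotes the entrywise complex conjugate of F, and F* = F̄ᵗ. Then the positive definite matrices F*F and (F*F)⁻¹ have the same characteristic polynomial; in particular, the eigenvalue list of F*F (with multiplicities) is invariant under the map λ ↦ 1/λ. -/

import Mathlib

/-!
From `F * F̄ = ε • 1` and `ε² = 1` one reads off the explicit inverse `(F*F)⁻¹ = F̄ * Fᵀ`,
which has the same characteristic polynomial as `Fᵀ * F̄ = (F*F)ᵀ`. For the roots: the
characteristic polynomial of `A⁻¹` is a nonzero multiple of the reverse of that of `A`, and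
reversing a split polynomial with nonzero constant term inverts its roots.
-/

open Matrix Polynomial

namespace Polynomial
variable {K : Type*} [Field K]

theorem reverse_X_sub_C {a : K} (ha : a ≠ 0) : (X - C a).reverse = C (-a) * (X - C a⁻¹) := by
  have hX : (X : K[X]).reverse = 1 := by rw [← one_mul X, reverse_mul_X, ← C_1, reverse_C]
  rw [sub_eq_add_neg, ← C_neg, reverse_add_C, natDegree_X, hX, mul_sub, ← C_mul,
    neg_mul, mul_inv_cancel₀ ha]
  simp only [C_neg, map_one, pow_one]
  ring

theorem reverse_prod_X_sub_C {s : Multiset K} (hs : ∀ a ∈ s, a ≠ 0) :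
    (s.map fun a => X - C a).prod.reverse =
      C (s.map Neg.neg).prod * ((s.map (·⁻¹)).map fun a => X - C a).prod := by
  induction s using Multiset.induction_on with
  | empty => simpa using reverse_C (1 : K)
  | cons a s ih =>
    rw [Multiset.forall_mem_cons] at hs
    simp only [Multiset.map_cons, Multiset.prod_cons]
    rw [reverse_mul_of_domain, reverse_X_sub_C hs.1, ih hs.2, C_mul]
    ring

theorem roots_reverse {p : K[X]} (hroots : Multiset.card p.roots = p.natDegree)
    (h0 : p.coeff 0 ≠ 0) : p.reverse.roots = p.roots.map (·⁻¹) := by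
  have hp : p ≠ 0 := fun h => h0 (by simp [h])
  have hs : ∀ a ∈ p.roots, a ≠ 0 := by
    rintro a ha rfl
    exact h0 (by rw [coeff_zero_eq_eval_zero]; exact (mem_roots hp).1 ha)
  have hc : p.leadingCoeff * (p.roots.map Neg.neg).prod ≠ 0 :=
    mul_ne_zero (leadingCoeff_ne_zero.2 hp)
      (Multiset.prod_ne_zero (by simpa using fun h => hs 0 h rfl))
  conv_lhs => rw [← C_leadingCoeff_mul_prod_multiset_X_sub_C hroots]
  rw [reverse_mul_of_domain, reverse_C, reverse_prod_X_sub_C hs, ← mul_assoc, ← C_mul,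
    roots_C_mul _ hc, roots_multiset_prod_X_sub_C]

end Polynomial

namespace Matrix
variable {K : Type*} [Field K] {n : Type*} [Fintype n] [DecidableEq n]

theorem roots_charpoly_inv {A : Matrix n n K} (hA : IsUnit A)
    (hroots : Multiset.card A.charpoly.roots = Fintype.card n) :
    A⁻¹.charpoly.roots = A.charpoly.roots.map (·⁻¹) := by
  have hdet : IsUnit A.det := (isUnit_iff_isUnit_det A).1 hA
  have h0 : A.charpoly.coeff 0 ≠ 0 := by
    intro h
    simp [det_eq_sign_charpoly_coeff, h] at hdet
  rw [charpoly_inv A hA, ← reverse_charpoly, ← C_1, ← C_neg, ← C_pow, ← C_mul,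
    roots_C_mul _ (by simpa using hdet.ne_zero),
    roots_reverse (by rwa [charpoly_natDegree_eq_dim]) h0]

variable {R : Type*} [CommRing R] [StarRing R]

theorem conjTranspose_mul_self_mul_eq_one {F : Matrix n n R} {ε : R} (hε : ε * ε = 1)
    (h : F * F.map (starRingEnd R) = ε • 1) : Fᴴ * F * (F.map (starRingEnd R) * Fᵀ) = 1 := by
  have hFF : Fᴴ * Fᵀ = (F * F.map (starRingEnd R))ᵀ := by rw [transpose_mul]; rfl
  rw [h, transpose_smul, transpose_one] at hFF
  rw [Matrix.mul_assoc, ← Matrix.mul_assoc F, h, Matrix.smul_mul, Matrix.one_mul,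
    Matrix.mul_smul, hFF, smul_smul, hε, one_smul]

theorem charpoly_inv_conjTranspose_mul_self {F : Matrix n n R} {ε : R} (hε : ε * ε = 1)
    (h : F * F.map (starRingEnd R) = ε • 1) :
    (Fᴴ * F)⁻¹.charpoly = (Fᴴ * F).charpoly := by
  rw [inv_eq_right_inv (conjTranspose_mul_self_mul_eq_one hε h), charpoly_mul_comm,
    ← charpoly_transpose (Fᴴ * F), transpose_mul]
  rfl

end Matrix

theorem stmt_3_general {n : ℕ} (F : Matrix (Fin n) (Fin n) ℂ)
    (ε : ℂ) (hε : ε = 1 ∨ ε = -1)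
    (h : F * F.map (starRingEnd ℂ) = ε • (1 : Matrix (Fin n) (Fin n) ℂ)) :
    (Fᴴ * F).charpoly = ((Fᴴ * F)⁻¹).charpoly ∧
      ((Fᴴ * F).charpoly.roots).map (fun l => l⁻¹) = (Fᴴ * F).charpoly.roots := by
  have hε2 : ε * ε = 1 := by rcases hε with rfl | rfl <;> norm_num
  have hcharpoly := charpoly_inv_conjTranspose_mul_self hε2 h
  have hunit : IsUnit (Fᴴ * F) := (isUnit_iff_isUnit_det _).2
    (isUnit_det_of_right_inverse (conjTranspose_mul_self_mul_eq_one hε2 h))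
  refine ⟨hcharpoly.symm, ?_⟩
  have hroots : Multiset.card (Fᴴ * F).charpoly.roots = Fintype.card (Fin n) := by
    rw [IsAlgClosed.card_roots_eq_natDegree, charpoly_natDegree_eq_dim]
  rw [← roots_charpoly_inv hunit hroots, hcharpoly]

/-- If `F` is an invertible `n × n` complex matrix with `F ⬝ F̄ = ε • 1`, `ε = ±1`,
then `F*F` and `(F*F)⁻¹` have the same characteristic polynomial; in particular the
eigenvalue list (multiset of roots of the characteristic polynomial) of `F*F` is
invariant under `λ ↦ λ⁻¹`. -/
theorem stmt_3 {n : ℕ} (F : Matrix (Fin n) (Fin n) ℂ) (hF : IsUnit F)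
    (ε : ℂ) (hε : ε = 1 ∨ ε = -1)
    (h : F * F.map (starRingEnd ℂ) = ε • (1 : Matrix (Fin n) (Fin n) ℂ)) :
    (Fᴴ * F).charpoly = ((Fᴴ * F)⁻¹).charpoly ∧
      ((Fᴴ * F).charpoly.roots).map (fun l => l⁻¹) = (Fᴴ * F).charpoly.roots :=
  stmt_3_general F ε hε h
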